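/- arXiv:0710.3981 — 2 statements merged into one kernel-verified Lean document; each statement's English description precedes it below -/
import Mathlib

section
/- For every positive integer n and all nonnegative integers a_1, …, a_n, one has (2π)^{-n} ∫_{[0,2π]^n} ∏_{1≤i,j≤n, i≠j} (1 - e^{i(θ_i-θ_j)})^{a_i} dθ_1⋯dθ_n = (a_1+⋯+a_n)! / (a_1!⋯a_n!). -/
/-!
Good's proof. For `z` on the unit circle write `F_a(z) = ∏_{i ≠ j} (1 - z_i / z_j) ^ a_i`.
Evaluating the Lagrange interpolation of the constant `1` at `0` gives
`∑_k ∏_{j ≠ k} (1 - z_k / z_j)⁻¹ = 1`, hence `F_a = ∑_k F_{a - e_k}` whenever all `a_k > 0`.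
If `a_i = 0`, then `z_i` enters `F_a` only through a polynomial in `z_i⁻¹` with constant term `1`,
so by the mean value property integrating out `θ_i` contributes `2π` and deletes the index `i`.
The multinomial coefficients obey the same recursion and the same boundary rule.
-/

open MeasureTheory Complex Finset Real

theorem Finset.prod_erase_eq_prod_ite {ι M : Type*} [Fintype ι] [DecidableEq ι] [CommMonoid M]
    (f : ι → M) (i : ι) : ∏ j ∈ univ.erase i, f j = ∏ j, if j = i then 1 else f j := by
  rw [prod_ite, prod_const_one, one_mul, filter_ne']

theorem Lagrange.sum_prod_inv_one_sub_div {ι K : Type*} [Fintype ι] [DecidableEq ι] [Nonempty ι]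
    [Field K] {z : ι → K} (hz : ∀ i, z i ≠ 0) (hinj : Function.Injective z) :
    ∑ i, (∏ j ∈ univ.erase i, (1 - z i / z j))⁻¹ = 1 := by
  have h := congrArg (Polynomial.eval 0) (Lagrange.sum_basis hinj.injOn univ_nonempty)
  rw [Polynomial.eval_finsetSum, Polynomial.eval_one] at h
  refine Eq.trans (sum_congr rfl fun i _ => ?_) h
  rw [Lagrange.basis, Polynomial.eval_prod, ← prod_inv_distrib]
  refine prod_congr rfl fun j hj => ?_
  have hij : z i - z j ≠ 0 := sub_ne_zero.2 (hinj.ne (ne_of_mem_erase hj).symm)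
  have hji : z j - z i ≠ 0 := sub_ne_zero.2 (hinj.ne (ne_of_mem_erase hj))
  have hzj := hz j
  simp only [Lagrange.basisDivisor, Polynomial.eval_mul, Polynomial.eval_C, Polynomial.eval_sub,
    Polynomial.eval_X]
  field_simp
  ring

namespace Nat

variable {ι : Type*} [Fintype ι] [DecidableEq ι]

theorem sum_update_pred {a : ι → ℕ} {k : ι} (hk : a k ≠ 0) :
    ∑ i, Function.update a k (a k - 1) i = ∑ i, a i - 1 := by
  rw [sum_update_of_mem (mem_univ k), sdiff_singleton_eq_erase,
    ← add_sum_erase univ a (mem_univ k)]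
  omega

theorem mul_prod_factorial_update_pred {a : ι → ℕ} {k : ι} (hk : a k ≠ 0) :
    a k * ∏ i, (Function.update a k (a k - 1) i)! = ∏ i, (a i)! := by
  rw [← mul_prod_erase univ _ (mem_univ k), ← mul_prod_erase univ (fun i => (a i)!) (mem_univ k),
    Function.update_self, ← mul_assoc, mul_factorial_pred hk]
  congr 1
  exact prod_congr rfl fun i hi => by rw [Function.update_of_ne (ne_of_mem_erase hi)]

theorem multinomial_eq_sum_update_pred [Nonempty ι] {a : ι → ℕ} (ha : ∀ i, a i ≠ 0) :
    multinomial univ a = ∑ k, multinomial univ (Function.update a k (a k - 1)) := by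
  refine Nat.eq_of_mul_eq_mul_left (prod_pos fun i _ => factorial_pos (a i) : 0 < ∏ i, (a i)!) ?_
  have hterm : ∀ k, (∏ i, (a i)!) * multinomial univ (Function.update a k (a k - 1)) =
      a k * (∑ i, a i - 1)! := fun k => by
    rw [← mul_prod_factorial_update_pred (ha k), mul_assoc, multinomial_spec,
      sum_update_pred (ha k)]
  rw [multinomial_spec, mul_sum, sum_congr rfl fun k _ => hterm k, ← sum_mul, mul_factorial_pred]
  exact (sum_pos (fun i _ => pos_of_ne_zero (ha i)) univ_nonempty).ne'

theorem multinomial_univ_succAbove {n : ℕ} {a : Fin (n + 1) → ℕ} {i : Fin (n + 1)}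
    (hi : a i = 0) : multinomial univ a = multinomial univ (a ∘ i.succAbove) := by
  simp [multinomial, Fin.sum_univ_succAbove _ i, Fin.prod_univ_succAbove _ i, hi]

theorem cast_multinomial {α K : Type*} [Field K] [CharZero K] (s : Finset α) (f : α → ℕ) :
    (multinomial s f : K) = (∑ i ∈ s, f i)! / ∏ i ∈ s, ((f i)! : K) := by
  rw [eq_div_iff (prod_ne_zero_iff.2 fun i _ => Nat.cast_ne_zero.2 (factorial_ne_zero _)), mul_comm]
  exact_mod_cast multinomial_spec s f

end Nat

section DysonProduct

variable {ι K : Type*} [Fintype ι] [DecidableEq ι] [Field K]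

def dysonProduct (z : ι → K) (a : ι → ℕ) : K :=
  ∏ i, ∏ j ∈ univ.erase i, (1 - z i / z j) ^ a i

theorem dysonProduct_eq_prod_pow (z : ι → K) (a : ι → ℕ) :
    dysonProduct z a = ∏ i, (∏ j ∈ univ.erase i, (1 - z i / z j)) ^ a i := by
  simp only [dysonProduct, prod_pow]

theorem dysonProduct_eq_zero {z : ι → K} {a : ι → ℕ} {p q : ι} (hpq : p ≠ q) (hz : z p = z q)
    (hq : z q ≠ 0) (ha : a p ≠ 0) : dysonProduct z a = 0 :=
  prod_eq_zero (mem_univ p) <| prod_eq_zero (mem_erase.2 ⟨hpq.symm, mem_univ q⟩) <| by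
    simp [hz, hq, ha]

theorem dysonProduct_update_pred_mul {z : ι → K} {a : ι → ℕ} {k : ι} (hk : a k ≠ 0) :
    dysonProduct z (Function.update a k (a k - 1)) * ∏ j ∈ univ.erase k, (1 - z k / z j) =
      dysonProduct z a := by
  simp only [dysonProduct_eq_prod_pow, ← mul_prod_erase univ _ (mem_univ k),
    Function.update_self]
  rw [mul_right_comm, pow_sub_one_mul hk]
  congr 1
  exact prod_congr rfl fun i hi => by rw [Function.update_of_ne (ne_of_mem_erase hi)]

theorem dysonProduct_eq_sum_update_pred [Nonempty ι] {z : ι → K} (hz : ∀ i, z i ≠ 0)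
    {a : ι → ℕ} (ha : ∀ i, a i ≠ 0) :
    dysonProduct z a = ∑ k, dysonProduct z (Function.update a k (a k - 1)) := by
  by_cases hinj : Function.Injective z
  · have hG : ∀ k, ∏ j ∈ univ.erase k, (1 - z k / z j) ≠ 0 := fun k =>
      prod_ne_zero_iff.2 fun j hj => sub_ne_zero.2 fun h =>
        ne_of_mem_erase hj (hinj ((div_eq_one_iff_eq (hz j)).1 h.symm)).symm
    calc dysonProduct z a
        = dysonProduct z a * ∑ k, (∏ j ∈ univ.erase k, (1 - z k / z j))⁻¹ := by
          rw [Lagrange.sum_prod_inv_one_sub_div hz hinj, mul_one]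
      _ = ∑ k, dysonProduct z (Function.update a k (a k - 1)) := by
          rw [mul_sum]
          refine sum_congr rfl fun k _ => ?_
          rw [← dysonProduct_update_pred_mul (ha k), mul_inv_cancel_right₀ (hG k)]
  · -- at a coincidence `z p = z q` every term vanishes, since all exponents are positive
    obtain ⟨p, q, hpq, hne⟩ : ∃ p q, z p = z q ∧ p ≠ q := by
      simpa [Function.Injective] using hinj
    rw [dysonProduct_eq_zero hne hpq (hz q) (ha p)]
    refine (sum_eq_zero fun k _ => ?_).symm
    by_cases hk : k = p
    · subst hk
      exact dysonProduct_eq_zero hne.symm hpq.symm (hz k)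
        (by simp [Function.update_of_ne hne.symm, ha q])
    · exact dysonProduct_eq_zero hne hpq (hz q) (by simp [Function.update_of_ne (Ne.symm hk), ha p])

end DysonProduct

theorem dysonProduct_succAbove {K : Type*} [Field K] {n : ℕ} (z : Fin (n + 1) → K)
    {a : Fin (n + 1) → ℕ} {i : Fin (n + 1)} (hi : a i = 0) :
    dysonProduct z a = (∏ k, (1 - z (i.succAbove k) / z i) ^ a (i.succAbove k)) *
      dysonProduct (z ∘ i.succAbove) (a ∘ i.succAbove) := by
  simp only [dysonProduct, prod_erase_eq_prod_ite, Fin.prod_univ_succAbove _ i, hi, pow_zero,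
    ite_self, prod_const_one, one_mul, ← prod_mul_distrib, Fin.succAbove_ne, Fin.ne_succAbove,
    if_false, Fin.succAbove_right_inj, Function.comp_apply]

theorem integral_Icc_comp_inv_exp {E : Type*} [NormedAddCommGroup E] [NormedSpace ℂ E]
    [CompleteSpace E] {f : ℂ → E} (hf : Differentiable ℂ f) :
    ∫ x in Set.Icc 0 (2 * π), f (exp (I * x))⁻¹ = (2 * π) • f 0 := by
  have h := hf.diffContOnCl.circleAverage (c := 0) (R := 1)
  rw [← circleAverage_zero_one_congr_inv, circleAverage_def, inv_smul_eq_iff₀ two_pi_pos.ne'] at h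
  rw [integral_Icc_eq_integral_Ioc, ← intervalIntegral.integral_of_le two_pi_pos.le, ← h]
  simp [circleMap_zero, mul_comm I]

theorem integral_Icc_prod_one_sub_div_exp {ι : Type*} (s : Finset ι) (w : ι → ℂ) (b : ι → ℕ) :
    ∫ x in Set.Icc 0 (2 * π), ∏ k ∈ s, (1 - w k / exp (I * x)) ^ b k = 2 * π := by
  simpa [div_eq_mul_inv] using
    integral_Icc_comp_inv_exp (f := fun u => ∏ k ∈ s, (1 - w k * u) ^ b k) (by fun_prop)

noncomputable def torusMeasure (n : ℕ) : Measure (Fin n → ℝ) :=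
  Measure.pi fun _ => volume.restrict (Set.Icc 0 (2 * π))

theorem torusMeasure_eq_restrict (n : ℕ) :
    torusMeasure n = volume.restrict (Set.univ.pi fun _ => Set.Icc 0 (2 * π)) := by
  rw [volume_pi, Measure.restrict_pi_pi, torusMeasure]

theorem Continuous.integrable_torusMeasure {n : ℕ} {E : Type*} [NormedAddCommGroup E]
    {f : (Fin n → ℝ) → E} (hf : Continuous f) : Integrable f (torusMeasure n) := by
  rw [torusMeasure_eq_restrict]
  exact hf.continuousOn.integrableOn_compact (isCompact_univ_pi fun _ => isCompact_Icc)

theorem integral_torusMeasure_succ {n : ℕ} {E : Type*} [NormedAddCommGroup E] [NormedSpace ℝ E]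
    {f : (Fin (n + 1) → ℝ) → E} (hf : Integrable f (torusMeasure (n + 1))) (i : Fin (n + 1)) :
    ∫ θ, f θ ∂torusMeasure (n + 1) =
      ∫ y, (∫ x in Set.Icc 0 (2 * π), f (i.insertNth x y)) ∂torusMeasure n := by
  have e := (measurePreserving_piFinSuccAbove
    (fun _ : Fin (n + 1) => volume.restrict (Set.Icc 0 (2 * π))) i).symm
  rw [torusMeasure, ← e.integral_comp', integral_prod_symm]
  · rfl
  · exact (e.integrable_comp_emb (MeasurableEquiv.measurableEmbedding _)).2 hf

noncomputable def dysonIntegral (n : ℕ) (a : Fin n → ℕ) : ℂ :=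
  ∫ θ, dysonProduct (fun j => exp (I * θ j)) a ∂torusMeasure n

theorem continuous_dysonProduct_exp {n : ℕ} (a : Fin n → ℕ) :
    Continuous fun θ : Fin n → ℝ => dysonProduct (fun j => exp (I * θ j)) a := by
  unfold dysonProduct
  fun_prop (disch := exact fun _ => Complex.exp_ne_zero _)

theorem dysonIntegral_eq_sum_update_pred {n : ℕ} {a : Fin (n + 1) → ℕ} (ha : ∀ i, a i ≠ 0) :
    dysonIntegral (n + 1) a = ∑ k, dysonIntegral (n + 1) (Function.update a k (a k - 1)) := by
  simp only [dysonIntegral]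
  rw [← integral_finsetSum _ fun k _ => (continuous_dysonProduct_exp _).integrable_torusMeasure]
  exact integral_congr_ae (.of_forall fun θ =>
    dysonProduct_eq_sum_update_pred (fun _ => Complex.exp_ne_zero _) ha)

theorem dysonIntegral_succAbove {n : ℕ} {a : Fin (n + 1) → ℕ} {i : Fin (n + 1)} (hi : a i = 0) :
    dysonIntegral (n + 1) a = 2 * π * dysonIntegral n (a ∘ i.succAbove) := by
  rw [dysonIntegral, integral_torusMeasure_succ
    (continuous_dysonProduct_exp _).integrable_torusMeasure i, dysonIntegral, ← integral_const_mul]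
  refine integral_congr_ae (.of_forall fun y => ?_)
  simp only [dysonProduct_succAbove _ hi, Function.comp_def, Fin.insertNth_apply_succAbove,
    Fin.insertNth_apply_same]
  rw [integral_mul_const, integral_Icc_prod_one_sub_div_exp]

theorem dysonIntegral_eq_two_pi_pow_mul_multinomial (n : ℕ) (a : Fin n → ℕ) :
    dysonIntegral n a = (2 * π) ^ n * Nat.multinomial univ a := by
  induction n with
  | zero => simp [dysonIntegral, torusMeasure, dysonProduct, measureReal_def]
  | succ n ihn =>
    induction hs : ∑ i, a i using Nat.strong_induction_on generalizing a with
    | _ s ihs =>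
      by_cases ha : ∀ i, a i ≠ 0
      · rw [dysonIntegral_eq_sum_update_pred ha, Nat.multinomial_eq_sum_update_pred ha,
          Nat.cast_sum, mul_sum]
        refine sum_congr rfl fun k _ => ihs _ ?_ _ rfl
        have hle := single_le_sum (fun i _ => Nat.zero_le (a i)) (mem_univ k)
        have hk := ha k
        rw [Nat.sum_update_pred hk]
        omega
      · obtain ⟨i, hi⟩ := not_forall_not.1 ha
        rw [dysonIntegral_succAbove hi, ihn, Nat.multinomial_univ_succAbove hi]
        ring

theorem dyson_constant_term_general (n : ℕ) (a : Fin n → ℕ) :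
    (((2 * Real.pi : ℝ) ^ n : ℝ) : ℂ)⁻¹ *
      (∫ θ : Fin n → ℝ in Set.univ.pi fun _ => Set.Icc (0:ℝ) (2 * Real.pi),
        ∏ i, ∏ j ∈ Finset.univ.erase i,
          (1 - Complex.exp (Complex.I * (θ i - θ j))) ^ (a i)) =
    ((∑ i, a i).factorial : ℂ) / ∏ i, ((a i).factorial : ℂ) := by
  have h := dysonIntegral_eq_two_pi_pow_mul_multinomial n a
  simp only [dysonIntegral, dysonProduct, torusMeasure_eq_restrict] at h
  have hpi : ((2 * π : ℂ)) ^ n ≠ 0 := pow_ne_zero _ (by exact_mod_cast two_pi_pos.ne')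
  simp only [mul_sub, Complex.exp_sub]
  rw [h, Nat.cast_multinomial, ← mul_assoc, Complex.ofReal_pow, Complex.ofReal_mul,
    Complex.ofReal_ofNat, inv_mul_cancel₀ hpi, one_mul]

theorem dyson_constant_term (n : ℕ) (hn : 0 < n) (a : Fin n → ℕ) :
    (((2 * Real.pi : ℝ) ^ n : ℝ) : ℂ)⁻¹ *
      (∫ θ : Fin n → ℝ in Set.univ.pi fun _ => Set.Icc (0:ℝ) (2 * Real.pi),
        ∏ i, ∏ j ∈ Finset.univ.erase i,
          (1 - Complex.exp (Complex.I * (θ i - θ j))) ^ (a i)) =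
    ((∑ i, a i).factorial : ℂ) / ∏ i, ((a i).factorial : ℂ) :=
  dyson_constant_term_general n a
end

section
/- Let n and k be positive integers and let μ be a finite Borel measure on ℝ such that ∫_ℝ |x|^{2k(n-1)} dμ(x) < ∞, and set μ_j := ∫_ℝ x^j dμ(x) for 0 ≤ j ≤ 2k(n-1). Then the hyperdeterminant of the order-2k Hankel tensor built from the moments of μ equals a Selberg-type integral: ∑_{σ_2, …, σ_{2k} ∈ S_n} ε(σ_2)⋯ε(σ_{2k}) ∏_{i=1}^n μ_{(i-1)+(σ_2(i)-1)+⋯+(σ_{2k}(i)-1)} = (1/n!) ∫_{ℝ^n} ∏_{1≤i<j≤n} (x_i-x_j)^{2k} dμ(x_1)⋯dμ(x_n). -/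
/-!
Since `2k` is even, `∏_{i<j} (x_i - x_j)^{2k} = det(V(x))^{2k}` for the Vandermonde matrix `V(x)`.
Expanding each of the `2k` determinants by the Leibniz formula turns the integrand into a signed
sum, over `2k`-tuples `τ` of permutations, of monomials `∏_i x_i^{τ_1(i)+⋯+τ_{2k}(i)}`, and the
integral of each monomial against `μ^{⊗n}` is a product of moments. Writing `τ_{l+1} = σ_l τ_1`,
the sign of `τ_1` appears `2k` times and `τ_1` merely permutes the factors of the product over `i`,
so each of the `n!` choices of `τ_1` contributes the Hankel hyperdeterminant.
-/

open MeasureTheory Finset Equiv Matrix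

section Combinatorics

variable {R : Type*} [CommRing R] {n : ℕ}

theorem prod_Ioi_sub_pow_eq_det_vandermonde_pow {N : ℕ} (hN : Even N) (x : Fin n → R) :
    ∏ i, ∏ j ∈ Ioi i, (x i - x j) ^ N = (vandermonde x).det ^ N := by
  rw [det_vandermonde, ← prod_pow]
  refine prod_congr rfl fun i _ => ?_
  rw [← prod_pow]
  exact prod_congr rfl fun j _ => by rw [← neg_sub, hN.neg_pow]

theorem det_vandermonde_pow_eq_sum (x : Fin n → R) (N : ℕ) :
    (vandermonde x).det ^ N =
      ∑ τ : Fin N → Perm (Fin n),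
        (∏ l, ((Perm.sign (τ l) : ℤ) : R)) * ∏ i, x i ^ ∑ l, (τ l i : ℕ) := by
  have hdet : (vandermonde x).det =
      ∑ σ : Perm (Fin n), ((Perm.sign σ : ℤ) : R) * ∏ i, x i ^ (σ i : ℕ) := by
    rw [← det_transpose, det_apply']
    simp [vandermonde]
  rw [hdet, ← Fin.prod_const, prod_univ_sum, Fintype.piFinset_univ]
  refine sum_congr rfl fun τ _ => ?_
  rw [prod_mul_distrib, prod_comm (s := univ (α := Fin N))]
  simp_rw [prod_pow_eq_pow_sum]

theorem sum_val_le_mul_pred {N : ℕ} (f : Fin N → Fin n) : ∑ l, (f l : ℕ) ≤ N * (n - 1) := by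
  simpa using sum_le_card_nsmul univ (fun l => (f l : ℕ)) (n - 1) fun l _ => by omega

theorem prod_sign_cons_mul_right {N : ℕ} (hN : Even (N + 1)) (π : Perm (Fin n))
    (σ : Fin N → Perm (Fin n)) :
    ∏ l, ((Perm.sign ((Fin.cons π fun l => σ l * π : Fin (N + 1) → Perm (Fin n)) l) : ℤ) : R) =
      ∏ l, ((Perm.sign (σ l) : ℤ) : R) := by
  have hπ : ((Perm.sign π : ℤ) : R) ^ (N + 1) = 1 := by
    rw [← Int.cast_pow, ← Units.val_pow_eq_pow_val, Int.units_pow_eq_pow_mod_two,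
      Nat.even_iff.mp hN, pow_zero, Units.val_one, Int.cast_one]
  simp only [Fin.prod_univ_succ, Fin.cons_zero, Fin.cons_succ, map_mul, Units.val_mul,
    Int.cast_mul, prod_mul_distrib, prod_const, card_univ, Fintype.card_fin]
  linear_combination (∏ l, ((Perm.sign (σ l) : ℤ) : R)) * hπ

theorem sum_perm_tuple_eq_factorial_mul {N : ℕ} (hN : Even (N + 1)) (f : ℕ → R) :
    ∑ τ : Fin (N + 1) → Perm (Fin n),
        (∏ l, ((Perm.sign (τ l) : ℤ) : R)) * ∏ i, f (∑ l, (τ l i : ℕ)) =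
      n.factorial * ∑ σ : Fin N → Perm (Fin n),
        (∏ l, ((Perm.sign (σ l) : ℤ) : R)) * ∏ i : Fin n, f (i + ∑ l, (σ l i : ℕ)) := by
  rw [← (Fin.consEquiv fun _ => Perm (Fin n)).sum_comp, Fintype.sum_prod_type]
  have hfiber (π : Perm (Fin n)) :
      ∑ σ : Fin N → Perm (Fin n),
        (∏ l, ((Perm.sign ((Fin.cons π σ : Fin (N + 1) → Perm (Fin n)) l) : ℤ) : R)) *
          ∏ i, f (∑ l, ((Fin.cons π σ : Fin (N + 1) → Perm (Fin n)) l i : ℕ)) =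
      ∑ σ : Fin N → Perm (Fin n),
        (∏ l, ((Perm.sign (σ l) : ℤ) : R)) * ∏ i : Fin n, f (i + ∑ l, (σ l i : ℕ)) := by
    rw [← (piCongrRight fun _ => Equiv.mulRight π).sum_comp]
    refine sum_congr rfl fun σ _ => ?_
    rw [show (piCongrRight fun _ => Equiv.mulRight π) σ = fun l => σ l * π from rfl,
      prod_sign_cons_mul_right hN]
    congr 1
    simp only [Fin.sum_univ_succ, Fin.cons_zero, Fin.cons_succ, Perm.mul_apply]
    exact Equiv.prod_comp π fun j => f (j + ∑ l, (σ l j : ℕ))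
  simp only [Fin.consEquiv_apply, hfiber, sum_const, card_univ, Fintype.card_perm,
    Fintype.card_fin, nsmul_eq_mul]

end Combinatorics

theorem integrable_pow_of_integrable_abs_pow {μ : Measure ℝ} [IsFiniteMeasure μ] {N e : ℕ}
    (hN : Integrable (fun x : ℝ => |x| ^ N) μ) (he : e ≤ N) :
    Integrable (fun x : ℝ => x ^ e) μ := by
  refine ((integrable_const (1 : ℝ)).add hN).mono' (by fun_prop) (ae_of_all _ fun x => ?_)
  rw [Real.norm_eq_abs, abs_pow, Pi.add_apply]
  rcases le_total |x| 1 with h | h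
  · linarith [pow_le_one₀ (n := e) (abs_nonneg x) h, pow_nonneg (abs_nonneg x) N]
  · linarith [pow_le_pow_right₀ h he]

theorem integral_prod_Ioi_sub_pow_eq_sum {n N : ℕ} (hN : Even N) (μ : Measure ℝ)
    [IsFiniteMeasure μ] (hmom : Integrable (fun x : ℝ => |x| ^ (N * (n - 1))) μ) :
    ∫ x : Fin n → ℝ, ∏ i, ∏ j ∈ Ioi i, (x i - x j) ^ N ∂(Measure.pi fun _ => μ) =
      ∑ τ : Fin N → Perm (Fin n),
        (∏ l, ((Perm.sign (τ l) : ℤ) : ℝ)) * ∏ i, ∫ t, t ^ ∑ l, (τ l i : ℕ) ∂μ := by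
  have hint (τ : Fin N → Perm (Fin n)) (i : Fin n) :
      Integrable (fun t : ℝ => t ^ ∑ l, (τ l i : ℕ)) μ :=
    integrable_pow_of_integrable_abs_pow hmom (sum_val_le_mul_pred fun l => τ l i)
  simp_rw [prod_Ioi_sub_pow_eq_det_vandermonde_pow hN, det_vandermonde_pow_eq_sum]
  rw [integral_finsetSum _ fun τ _ => (Integrable.fintype_prod (hint τ)).const_mul _]
  refine sum_congr rfl fun τ _ => ?_
  rw [integral_const_mul, integral_fintype_prod_eq_prod fun i t => t ^ ∑ l, (τ l i : ℕ)]

theorem hankel_hyperdeterminant_selberg_general (n k : ℕ) (hk : 0 < k)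
    (μ : Measure ℝ) [IsFiniteMeasure μ]
    (hmom : Integrable (fun x : ℝ => |x| ^ (2 * k * (n - 1))) μ)
    (m : ℕ → ℝ) (hm : ∀ j ≤ 2 * k * (n - 1), m j = ∫ x : ℝ, x ^ j ∂μ) :
    (∑ σ : Fin (2 * k - 1) → Equiv.Perm (Fin n),
      (∏ l, ((Equiv.Perm.sign (σ l) : ℤ) : ℝ)) *
        ∏ i : Fin n, m ((i : ℕ) + ∑ l, ((σ l) i : ℕ))) =
    (1 / (n.factorial : ℝ)) *
      ∫ x : Fin n → ℝ,
        (∏ i, ∏ j ∈ Finset.Ioi i, (x i - x j) ^ (2 * k))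
        ∂(Measure.pi fun _ => μ) := by
  obtain ⟨N, hN⟩ : ∃ N, 2 * k = N + 1 := ⟨2 * k - 1, by omega⟩
  rw [show 2 * k - 1 = N by omega]
  rw [hN] at hmom hm ⊢
  have hEven : Even (N + 1) := hN ▸ even_two_mul k
  have hmoments (τ : Fin (N + 1) → Perm (Fin n)) :
      ∏ i, ∫ t, t ^ ∑ l, (τ l i : ℕ) ∂μ = ∏ i, m (∑ l, (τ l i : ℕ)) :=
    prod_congr rfl fun i _ => (hm _ (sum_val_le_mul_pred fun l => τ l i)).symm
  simp_rw [integral_prod_Ioi_sub_pow_eq_sum hEven μ hmom, hmoments,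
    sum_perm_tuple_eq_factorial_mul hEven m]
  rw [one_div, inv_mul_cancel_left₀ (by positivity)]

theorem hankel_hyperdeterminant_selberg (n k : ℕ) (hn : 0 < n) (hk : 0 < k)
    (μ : Measure ℝ) [IsFiniteMeasure μ]
    (hmom : Integrable (fun x : ℝ => |x| ^ (2 * k * (n - 1))) μ)
    (m : ℕ → ℝ) (hm : ∀ j ≤ 2 * k * (n - 1), m j = ∫ x : ℝ, x ^ j ∂μ) :
    (∑ σ : Fin (2 * k - 1) → Equiv.Perm (Fin n),
      (∏ l, ((Equiv.Perm.sign (σ l) : ℤ) : ℝ)) *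
        ∏ i : Fin n, m ((i : ℕ) + ∑ l, ((σ l) i : ℕ))) =
    (1 / (n.factorial : ℝ)) *
      ∫ x : Fin n → ℝ,
        (∏ i, ∏ j ∈ Finset.Ioi i, (x i - x j) ^ (2 * k))
        ∂(Measure.pi fun _ => μ) :=
  hankel_hyperdeterminant_selberg_general n k hk μ hmom m hm
end
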